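/- arXiv:1305.4450 — 2 statements merged into one kernel-verified Lean document; each statement's English description precedes it below -/
import Mathlib

section
/- The q-stuffle product is associative: for all words u, v, w over Y, (u ⊛_q v) ⊛_q w = u ⊛_q (v ⊛_q w). -/
open scoped BigOperators

/-- Words over the alphabet `Y = {y_s : s ≥ 1}`: a word is a list of positive integers. -/
abbrev Word : Type := List ℕ+

/-- The weight of a word `y_{i_1} ⋯ y_{i_r}` is `i_1 + ⋯ + i_r`. -/
def weight (w : Word) : ℕ := (w.map (fun s => (s : ℕ))).sum

/-- Noncommutative polynomials over `R` on the alphabet `Y`. -/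
abbrev NCPoly (R : Type) [CommRing R] : Type := Word →₀ R

variable {R : Type} [CommRing R]

/-- The `q`-stuffle product of two words, as a polynomial. -/
noncomputable def stuf (q : R) : Word → Word → NCPoly R
  | [], v => Finsupp.single v 1
  | u, [] => Finsupp.single u 1
  | s :: u, t :: v =>
      Finsupp.mapDomain (fun w => s :: w) (stuf q u (t :: v)) +
      Finsupp.mapDomain (fun w => t :: w) (stuf q (s :: u) v) +
      q • Finsupp.mapDomain (fun w => (s + t) :: w) (stuf q u v)
  termination_by u v => u.length + v.length
  decreasing_by all_goals (simp only [List.length_cons]; omega)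

/-- Bilinear extension of the `q`-stuffle product to polynomials. -/
noncomputable def stufP (q : R) (P Q : NCPoly R) : NCPoly R :=
  P.sum fun u a => Q.sum fun v b => (a * b) • stuf q u v

/-- Concatenation product of polynomials. -/
noncomputable def concP (P Q : NCPoly R) : NCPoly R :=
  P.sum fun u a => Q.sum fun v b => Finsupp.single (u ++ v) (a * b)

/-- Concatenation product of a list of polynomials. -/
noncomputable def concList : List (NCPoly R) → NCPoly R
  | [] => Finsupp.single [] 1
  | P :: L => concP P (concList L)

/-- `q`-stuffle product of a list of words. -/
noncomputable def stufList (q : R) : List Word → NCPoly R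
  | [] => Finsupp.single [] 1
  | u :: L => stufP q (Finsupp.single u 1) (stufList q L)

/-- A formal power series over `Y` is a function `Word → R`; `S w = ⟨S, w⟩`. -/
def unitS : Word → R := fun w => if w = [] then 1 else 0

/-- Pairing `⟨S, P⟩ = Σ_w ⟨S,w⟩⟨P,w⟩` between a series and a polynomial. -/
noncomputable def pairS (S : Word → R) (P : NCPoly R) : R := P.sum fun w c => c * S w

/-- Pairing between two polynomials. -/
noncomputable def pairP (P Q : NCPoly R) : R := Q.sum fun w c => c * P w

/-- The finite set of all words of weight `n`. -/
noncomputable def wordsOfWeight : ℕ → Finset Word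
  | 0 => {[]}
  | n + 1 =>
      (Finset.range (n + 1)).attach.biUnion fun i =>
        (wordsOfWeight i.1).image fun w => (n + 1 - i.1).toPNat' :: w
  termination_by n => n
  decreasing_by exact Finset.mem_range.mp i.2

/-- All words of weight at most `n`. -/
noncomputable def wordsUpTo (n : ℕ) : Finset Word := (Finset.range (n + 1)).biUnion wordsOfWeight

/-- The `q`-stuffle product of two formal power series (coefficient-wise, the sum
is finite since the `q`-stuffle preserves weight). -/
noncomputable def stufS (q : R) (S T : Word → R) : Word → R :=
  fun w => ∑ u ∈ wordsUpTo (weight w), ∑ v ∈ wordsUpTo (weight w),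
    S u * T v * (stuf q u v) w

/-- `q`-stuffle product of a list of series. -/
noncomputable def stufSList (q : R) (L : List (Word → R)) : Word → R :=
  L.foldr (stufS q) unitS

/-- All ways of writing a word as a concatenation of nonempty words. -/
noncomputable def splits : Word → Finset (List Word)
  | [] => {[]}
  | a :: v =>
      (Finset.range (v.length + 1)).attach.biUnion fun i =>
        (splits (v.drop i.1)).image fun L => (a :: v.take i.1) :: L
  termination_by w => w.length
  decreasing_by simp [List.length_drop]

/-- Lists of length `n` with entries in the finite set `s`. -/
noncomputable def tuples (s : Finset Word) : ℕ → Finset (List Word)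
  | 0 => {[]}
  | n + 1 => s.biUnion fun u => (tuples s n).image fun L => u :: L

/-- The Eulerian-type projector `π₁` associated to the `q`-stuffle:
`π₁(w) = Σ_{k≥1} ((-1)^{k-1}/k) Σ_{u_1,…,u_k ∈ Y⁺} ⟨w | u_1 ⊛_q ⋯ ⊛_q u_k⟩ u_1⋯u_k`. -/
noncomputable def qpi1 [Algebra ℚ R] (q : R) (w : Word) : NCPoly R :=
  ∑ v ∈ wordsUpTo (weight w),
    Finsupp.single v
      (∑ n ∈ Finset.Icc 1 (weight w),
        ((-1 : ℚ) ^ (n - 1) / n) •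
          ∑ L ∈ (splits v).filter (fun L => L.length = n), (stufList q L) w)

/-- The adjoint projector `π̌₁`:
`π̌₁(w) = Σ_{k≥1} ((-1)^{k-1}/k) Σ_{u_1⋯u_k = w, u_i ∈ Y⁺} u_1 ⊛_q ⋯ ⊛_q u_k`. -/
noncomputable def qpi1Check [Algebra ℚ R] (q : R) (w : Word) : NCPoly R :=
  ∑ L ∈ splits w, ((-1 : ℚ) ^ (L.length - 1) / (L.length : ℚ)) • stufList q L

/-- `S` is primitive for the coproduct dual to the `q`-stuffle:
`Δ S = S ⊗ 1 + 1 ⊗ S`, read off on the coefficient at `u ⊗ v`. -/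
def IsPrimitive (q : R) (S : Word → R) : Prop :=
  ∀ u v : Word, pairS S (stuf q u v) =
    (if v = [] then S u else 0) + (if u = [] then S v else 0)

/-- `S` is group-like for the coproduct dual to the `q`-stuffle: `Δ S = S ⊗ S`. -/
def IsGroupLike (q : R) (S : Word → R) : Prop :=
  ∀ u v : Word, pairS S (stuf q u v) = S u * S v

/-- Concatenation (Cauchy) product of two series. -/
noncomputable def concS (S T : Word → R) : Word → R :=
  fun w => ∑ i ∈ Finset.range (w.length + 1), S (w.take i) * T (w.drop i)

/-- Concatenation powers of a series. -/
noncomputable def concPow (S : Word → R) : ℕ → Word → R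
  | 0 => unitS
  | n + 1 => concS S (concPow S n)

/-- Formal logarithm `log S = Σ_{n≥1} (-1)^{n-1} (S-1)^n / n` (for `S` with constant term 1,
the sum at a word `w` has at most `|w|` nonzero terms). -/
noncomputable def logS [Algebra ℚ R] (S : Word → R) : Word → R :=
  fun w => ∑ n ∈ Finset.Icc 1 w.length,
    ((-1 : ℚ) ^ (n - 1) / n) • concPow (S - unitS) n w

/-- The product on `R⟨⟨Y⟩⟩ ⊗^ R⟨⟨Y⟩⟩` where the left factor is multiplied by `⊛_q`
and the right factor by concatenation; a tensor is a function `Word → Word → R`. -/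
noncomputable def tmul (q : R) (A B : Word → Word → R) : Word → Word → R :=
  fun w w' => ∑ i ∈ Finset.range (w'.length + 1),
    stufS q (fun u => A u (w'.take i)) (fun u => B u (w'.drop i)) w

/-- The unit `1 ⊗ 1` of the tensor algebra. -/
def unitT : Word → Word → R := fun u v => if u = [] ∧ v = [] then 1 else 0

/-- Powers in the tensor algebra. -/
noncomputable def tpow (q : R) (A : Word → Word → R) : ℕ → Word → Word → R
  | 0 => unitT
  | n + 1 => tmul q A (tpow q A n)

/-- Formal logarithm in the tensor algebra. -/
noncomputable def logT [Algebra ℚ R] (q : R) (A : Word → Word → R) : Word → Word → R :=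
  fun w w' => ∑ n ∈ Finset.Icc 1 w'.length,
    ((-1 : ℚ) ^ (n - 1) / n) • tpow q (A - unitT) n w w'

/-- The diagonal series `D_Y = Σ_w w ⊗ w`. -/
def diagT : Word → Word → R := fun u v => if u = v then 1 else 0

/-- Order on words: lexicographic extension of the order `y_1 > y_2 > ⋯` on letters
(`wlt u v` means `u < v`). -/
def wlt (u v : Word) : Prop := List.Lex (fun a b : ℕ+ => b < a) u v

/-- A word is Lyndon if it is nonempty and strictly smaller than each of its proper suffixes. -/
def IsLyndon (w : Word) : Prop :=
  w ≠ [] ∧ ∀ i, 0 < i → i < w.length → wlt w (w.drop i)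

/-- Index of the standard factorization of a Lyndon word: the right factor is the
longest proper Lyndon suffix. -/
noncomputable def stdIdx (l : Word) : ℕ :=
  sInf {i | 0 < i ∧ i < l.length ∧ IsLyndon (l.drop i)}

/-- The family `Π_l`, for `l` a Lyndon word: `Π_{y_k} = π₁(y_k)`, and
`Π_l = [Π_s, Π_r]` for the standard factorization `l = (s, r)`. -/
noncomputable def PiL [Algebra ℚ R] (q : R) : Word → NCPoly R
  | [] => Finsupp.single [] 1
  | [s] => qpi1 q [s]
  | a :: b :: w =>
      if h : 0 < stdIdx (a :: b :: w) ∧ stdIdx (a :: b :: w) < (a :: b :: w).length then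
        concP (PiL q ((a :: b :: w).take (stdIdx (a :: b :: w))))
              (PiL q ((a :: b :: w).drop (stdIdx (a :: b :: w)))) -
        concP (PiL q ((a :: b :: w).drop (stdIdx (a :: b :: w))))
              (PiL q ((a :: b :: w).take (stdIdx (a :: b :: w))))
      else 0
  termination_by w => w.length
  decreasing_by all_goals (simp only [List.length_take, List.length_drop, List.length_cons] at h ⊢; omega)

/-- The Lyndon factorization of a word into a nonincreasing product of Lyndon words
(repeatedly take the longest Lyndon prefix). -/
noncomputable def lynFact : Word → List Word
  | [] => []
  | a :: w =>
      (a :: w).take (sSup {i | i ≤ w.length ∧ IsLyndon ((a :: w).take (i + 1))} + 1) ::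
      lynFact ((a :: w).drop (sSup {i | i ≤ w.length ∧ IsLyndon ((a :: w).take (i + 1))} + 1))
  termination_by w => w.length
  decreasing_by simp only [List.length_drop, List.length_cons]; omega

/-- The PBW-type basis: `Π_w = Π_{l_1} ⋯ Π_{l_n}` for the Lyndon factorization
`w = l_1 ⋯ l_n`, `l_1 ≥ ⋯ ≥ l_n`. -/
noncomputable def PiW [Algebra ℚ R] (q : R) (w : Word) : NCPoly R :=
  concList ((lynFact w).map (PiL q))

/-!
Expanding `(u ⊛_q v) ⊛_q w` and `u ⊛_q (v ⊛_q w)` along the first letters of the three words,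
both bracketings obey the same seven-term recursion (`IsTripleStuffle`), and they agree when one
of the words is empty, so they coincide by induction on the total length.
-/

open Finsupp

section QStuffle

variable (q : R)

lemma stuf_nil_left (v : Word) : stuf q [] v = single v 1 := by
  simp [stuf]

lemma stuf_nil_right (u : Word) : stuf q u [] = single u 1 := by
  cases u <;> simp [stuf]

lemma stuf_cons_cons (s t : ℕ+) (u v : Word) :
    stuf q (s :: u) (t :: v) =
      mapDomain (fun w => s :: w) (stuf q u (t :: v)) +
      mapDomain (fun w => t :: w) (stuf q (s :: u) v) +
      q • mapDomain (fun w => (s + t) :: w) (stuf q u v) := by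
  rw [stuf]

lemma stufP_add_left (P P' Q : NCPoly R) :
    stufP q (P + P') Q = stufP q P Q + stufP q P' Q := by
  simp [stufP, sum_add_index', add_mul, add_smul]

lemma stufP_add_right (P Q Q' : NCPoly R) :
    stufP q P (Q + Q') = stufP q P Q + stufP q P Q' := by
  simp [stufP, sum_add_index', mul_add, add_smul, sum_add]

lemma stufP_smul_left (r : R) (P Q : NCPoly R) :
    stufP q (r • P) Q = r • stufP q P Q := by
  rw [stufP, sum_smul_index (by simp), stufP, smul_sum]
  simp [smul_sum, mul_assoc, mul_smul]

lemma stufP_smul_right (r : R) (P Q : NCPoly R) :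
    stufP q P (r • Q) = r • stufP q P Q := by
  rw [stufP, stufP, smul_sum]
  refine sum_congr fun u _ => ?_
  rw [sum_smul_index (by simp), smul_sum]
  simp [mul_left_comm _ r, mul_smul]

lemma stufP_single_single (u v : Word) (a b : R) :
    stufP q (single u a) (single v b) = (a * b) • stuf q u v := by
  simp [stufP]

lemma stufP_single_nil_right (P : NCPoly R) : stufP q P (single [] 1) = P := by
  simp [stufP, stuf_nil_right, smul_single]

lemma stufP_single_nil_left (Q : NCPoly R) : stufP q (single [] 1) Q = Q := by
  simp [stufP, stuf_nil_left, smul_single]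

lemma stufP_mapDomain_cons (s t : ℕ+) (P Q : NCPoly R) :
    stufP q (mapDomain (fun w => s :: w) P) (mapDomain (fun w => t :: w) Q) =
      mapDomain (fun w => s :: w) (stufP q P (mapDomain (fun w => t :: w) Q)) +
      mapDomain (fun w => t :: w) (stufP q (mapDomain (fun w => s :: w) P) Q) +
      q • mapDomain (fun w => (s + t) :: w) (stufP q P Q) := by
  induction P using Finsupp.induction_linear with
  | zero => simp [stufP]
  | add P P' hP hP' =>
    simp only [mapDomain_add, stufP_add_left, hP, hP', smul_add]
    abel
  | single u a =>
    induction Q using Finsupp.induction_linear with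
    | zero => simp [stufP]
    | add Q Q' hQ hQ' =>
      simp only [mapDomain_add, stufP_add_right, hQ, hQ', smul_add]
      abel
    | single v b =>
      simp only [mapDomain_single, stufP_single_single, stuf_cons_cons, mapDomain_smul]
      module

structure IsTripleStuffle (F : Word → Word → Word → NCPoly R) : Prop where
  nil_left (v w : Word) : F [] v w = stuf q v w
  nil_mid (u w : Word) : F u [] w = stuf q u w
  nil_right (u v : Word) : F u v [] = stuf q u v
  cons_cons_cons (a b c : ℕ+) (u v w : Word) :
    F (a :: u) (b :: v) (c :: w) =
      mapDomain (fun x => a :: x) (F u (b :: v) (c :: w)) +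
      mapDomain (fun x => b :: x) (F (a :: u) v (c :: w)) +
      mapDomain (fun x => c :: x) (F (a :: u) (b :: v) w) +
      q • (mapDomain (fun x => (a + b) :: x) (F u v (c :: w)) +
        mapDomain (fun x => (a + c) :: x) (F u (b :: v) w) +
        mapDomain (fun x => (b + c) :: x) (F (a :: u) v w)) +
      q ^ 2 • mapDomain (fun x => (a + b + c) :: x) (F u v w)

variable {q} in
theorem IsTripleStuffle.unique {F G : Word → Word → Word → NCPoly R}
    (hF : IsTripleStuffle q F) (hG : IsTripleStuffle q G) : ∀ u v w, F u v w = G u v w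
  | [], v, w => by rw [hF.nil_left, hG.nil_left]
  | _ :: _, [], w => by rw [hF.nil_mid, hG.nil_mid]
  | _ :: _, _ :: _, [] => by rw [hF.nil_right, hG.nil_right]
  | a :: u, b :: v, c :: w => by
    rw [hF.cons_cons_cons, hG.cons_cons_cons, hF.unique hG u (b :: v) (c :: w),
      hF.unique hG (a :: u) v (c :: w), hF.unique hG (a :: u) (b :: v) w,
      hF.unique hG u v (c :: w), hF.unique hG u (b :: v) w, hF.unique hG (a :: u) v w,
      hF.unique hG u v w]
termination_by u v w => u.length + v.length + w.length

lemma single_cons_eq_mapDomain (a : ℕ+) (u : Word) (r : R) :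
    single (a :: u) r = mapDomain (fun x => a :: x) (single u r) :=
  mapDomain_single.symm

theorem isTripleStuffle_stuf_left :
    IsTripleStuffle q fun u v w => stufP q (stuf q u v) (single w 1) where
  nil_left v w := by rw [stuf_nil_left, stufP_single_single, one_mul, one_smul]
  nil_mid u w := by rw [stuf_nil_right, stufP_single_single, one_mul, one_smul]
  nil_right u v := stufP_single_nil_right q _
  cons_cons_cons a b c u v w := by
    simp only [stuf_cons_cons q a b, single_cons_eq_mapDomain c, stufP_add_left,
      stufP_smul_left, stufP_mapDomain_cons, mapDomain_add, mapDomain_smul]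
    module

theorem isTripleStuffle_stuf_right :
    IsTripleStuffle q fun u v w => stufP q (single u 1) (stuf q v w) where
  nil_left v w := stufP_single_nil_left q _
  nil_mid u w := by rw [stuf_nil_left, stufP_single_single, one_mul, one_smul]
  nil_right u v := by rw [stuf_nil_right, stufP_single_single, one_mul, one_smul]
  cons_cons_cons a b c u v w := by
    simp only [stuf_cons_cons q b c, single_cons_eq_mapDomain a, stufP_add_right,
      stufP_smul_right, stufP_mapDomain_cons, mapDomain_add, mapDomain_smul, ← add_assoc]
    module

end QStuffle

/-- The `q`-stuffle product is associative: `(u ⊛_q v) ⊛_q w = u ⊛_q (v ⊛_q w)`. -/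
theorem qstuffle_assoc (q : R) (u v w : Word) :
    stufP q (stuf q u v) (Finsupp.single w 1) = stufP q (Finsupp.single u 1) (stuf q v w) :=
  (isTripleStuffle_stuf_left q).unique (isTripleStuffle_stuf_right q) u v w
end

section
/- The logarithm of the diagonal series D_Y = Σ_{w ∈ Y*} w ⊗ w (in the algebra k⟨⟨Y⟩⟩ ⊗^ k⟨⟨Y⟩⟩ with product (⊛_q) ⊗ conc) equals Σ_{w ∈ Y^+} w ⊗ π_1(w), where π_1(w) = w + Σ_{k≥2} ((-1)^{k-1}/k) Σ_{u_1,...,u_k ∈ Y^+} ⟨w, u_1 ⊛_q ... ⊛_q u_k⟩ u_1...u_k. -/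
open scoped BigOperators

variable {R : Type} [CommRing R]

/-!
Since `D_Y - 1 ⊗ 1 = Σ_{u ∈ Y⁺} u ⊗ u` and the right tensor factor multiplies by concatenation,
`(D_Y - 1 ⊗ 1)^n = Σ_{u_1, …, u_n ∈ Y⁺} u_1 ⊛_q ⋯ ⊛_q u_n ⊗ u_1 ⋯ u_n`: its coefficient at
`w ⊗ w'` is a sum over the factorizations of `w'` into `n` nonempty words. Summing the logarithm
series gives the coefficient of `w'` in `π₁(w)`; the two truncations of the sum over `n`
(`n ≤ |w'|` in `log`, `n ≤ weight w` in `π₁`) agree because `⊛_q` preserves the weight, so only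
words with `|w'| ≤ weight w' = weight w` contribute.
-/

@[simp] lemma weight_nil : weight [] = 0 := rfl

@[simp] lemma weight_cons (a : ℕ+) (w : Word) : weight (a :: w) = a + weight w := by
  simp [weight]

lemma weight_append (u v : Word) : weight (u ++ v) = weight u + weight v := by
  simp [weight]

lemma weight_flatten (L : List Word) : weight L.flatten = (L.map weight).sum := by
  induction L with
  | nil => rfl
  | cons u L ih => simp [weight_append, ih]

lemma length_le_weight (w : Word) : w.length ≤ weight w := by
  induction w with
  | nil => rfl
  | cons a w ih => simp only [List.length_cons, weight_cons]; have := a.pos; omega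

lemma mem_wordsOfWeight {n : ℕ} {w : Word} : w ∈ wordsOfWeight n ↔ weight w = n := by
  induction n using wordsOfWeight.induct generalizing w with
  | case1 => cases w <;> simp [wordsOfWeight]
  | case2 n ih =>
    rw [wordsOfWeight]
    simp only [Finset.mem_biUnion, Finset.mem_attach, Finset.mem_image, true_and, ih,
      Subtype.exists, Finset.mem_range]
    constructor
    · rintro ⟨i, hi, v, rfl, rfl⟩
      rw [weight_cons, PNat.toPNat'_coe (by omega)]
      omega
    · intro hw
      obtain _ | ⟨a, v⟩ := w
      · simp at hw
      · rw [weight_cons] at hw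
        refine ⟨weight v, by have := a.pos; omega, v, rfl, ?_⟩
        rw [show n + 1 - weight v = a by omega, PNat.coe_toPNat']

lemma mem_wordsUpTo {n : ℕ} {w : Word} : w ∈ wordsUpTo n ↔ weight w ≤ n := by
  simp [wordsUpTo, mem_wordsOfWeight]

lemma mapDomain_cons_apply_nil {α M : Type*} [AddCommMonoid M] (a : α) (P : List α →₀ M) :
    P.mapDomain (a :: ·) [] = 0 :=
  Finsupp.mapDomain_of_notMem_range P _ (by rintro ⟨y, ⟨⟩⟩)

lemma mapDomain_cons_apply_cons {α M : Type*} [DecidableEq α] [AddCommMonoid M] (a b : α)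
    (P : List α →₀ M) (y : List α) :
    P.mapDomain (a :: ·) (b :: y) = if a = b then P y else 0 := by
  split_ifs with h
  · subst h
    exact Finsupp.mapDomain_apply List.cons_injective P y
  · exact Finsupp.mapDomain_of_notMem_range P _
      (by rintro ⟨z, hz⟩; exact h (List.cons_eq_cons.mp hz).1)

lemma stuf_apply_eq_zero_of_weight_ne (q : R) {u v x : Word}
    (h : weight x ≠ weight u + weight v) : stuf q u v x = 0 := by
  induction u, v using stuf.induct generalizing x with
  | case1 v =>
    rw [stuf, Finsupp.single_apply, if_neg]
    rintro rfl; simp at h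
  | case2 u hu =>
    rw [stuf.eq_2 _ _ hu, Finsupp.single_apply, if_neg]
    rintro rfl; simp at h
  | case3 s u t v ih₁ ih₂ ih₃ =>
    rw [stuf]
    obtain _ | ⟨b, y⟩ := x
    · simp [mapDomain_cons_apply_nil]
    · simp only [weight_cons] at h ih₁ ih₂
      simp only [Finsupp.add_apply, Finsupp.smul_apply, mapDomain_cons_apply_cons]
      rw [ite_eq_right_iff.mpr fun hb => ih₁ (by subst hb; omega),
        ite_eq_right_iff.mpr fun hb => ih₂ (by subst hb; omega),
        ite_eq_right_iff.mpr fun hb => ih₃ (by subst hb; rw [PNat.add_coe] at h; omega)]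
      simp

lemma stufP_single_left_apply (q : R) (u : Word) (Q : NCPoly R) (x : Word) :
    stufP q (Finsupp.single u 1) Q x = ∑ v ∈ Q.support, Q v * stuf q u v x := by
  rw [stufP, Finsupp.sum_single_index (by simp [Finsupp.sum]), Finsupp.sum,
    Finsupp.finsetSum_apply]
  simp

lemma stufList_apply_eq_zero_of_weight_ne (q : R) {L : List Word} {x : Word}
    (h : weight x ≠ (L.map weight).sum) : stufList q L x = 0 := by
  induction L generalizing x with
  | nil =>
    rw [stufList, Finsupp.single_apply, if_neg]
    rintro rfl; simp at h
  | cons u L ih =>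
    rw [stufList, stufP_single_left_apply]
    refine Finset.sum_eq_zero fun v _ => ?_
    by_cases hv : weight v = (L.map weight).sum
    · rw [stuf_apply_eq_zero_of_weight_ne q (by simp at h; omega), mul_zero]
    · rw [ih hv, zero_mul]

lemma sum_wordsUpTo_mul_stuf (q : R) (u : Word) (Q : NCPoly R) (x : Word) :
    ∑ v ∈ wordsUpTo (weight x), Q v * stuf q u v x = stufP q (Finsupp.single u 1) Q x := by
  rw [stufP_single_left_apply]
  calc ∑ v ∈ wordsUpTo (weight x), Q v * stuf q u v x
      = ∑ v ∈ wordsUpTo (weight x) ∪ Q.support, Q v * stuf q u v x := by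
        refine Finset.sum_subset Finset.subset_union_left fun v _ hv => ?_
        rw [mem_wordsUpTo, not_le] at hv
        rw [stuf_apply_eq_zero_of_weight_ne q (by omega), mul_zero]
    _ = ∑ v ∈ Q.support, Q v * stuf q u v x := by
        refine (Finset.sum_subset Finset.subset_union_right fun v _ hv => ?_).symm
        rw [Finsupp.notMem_support_iff.mp hv, zero_mul]

lemma stufS_zero_left (q : R) (T : Word → R) : stufS q (fun _ => 0) T = 0 := by
  ext x
  simp [stufS]

lemma stufS_indicator_left_apply (q : R) (t : Word) (T : Word → R) (x : Word) :
    stufS q (fun u => if u = t then 1 else 0) T x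
      = ∑ v ∈ wordsUpTo (weight x), T v * stuf q t v x := by
  simp only [stufS, ite_mul, one_mul, zero_mul, Finset.sum_ite_eq', Finset.sum_ite_irrel,
    Finset.sum_const_zero]
  split_ifs with ht
  · rfl
  · rw [mem_wordsUpTo, not_le] at ht
    refine (Finset.sum_eq_zero fun v _ => ?_).symm
    rw [stuf_apply_eq_zero_of_weight_ne q (by omega), mul_zero]

lemma mem_splits_cons {a : ℕ+} {v : Word} {L : List Word} :
    L ∈ splits (a :: v) ↔
      ∃ i < v.length + 1, ∃ L' ∈ splits (v.drop i), (a :: v.take i) :: L' = L := by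
  rw [splits]
  simp

lemma flatten_eq_and_length_le_of_mem_splits {w : Word} {L : List Word} (hL : L ∈ splits w) :
    L.flatten = w ∧ L.length ≤ w.length := by
  induction w using splits.induct generalizing L with
  | case1 => simp_all [splits]
  | case2 a v ih =>
    obtain ⟨i, hi, L', hL', rfl⟩ := mem_splits_cons.mp hL
    obtain ⟨hflat, hlen⟩ := ih ⟨i, Finset.mem_range.mpr hi⟩ hL'
    simp only [List.length_drop] at hlen
    exact ⟨by simp [hflat], by simp; omega⟩

lemma nil_mem_splits_iff {w : Word} : [] ∈ splits w ↔ w = [] := by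
  cases w with
  | nil => simp [splits]
  | cons a v => simp [mem_splits_cons]

lemma filter_splits_length_eq_empty {w : Word} {n : ℕ} (hn : w.length < n) :
    (splits w).filter (·.length = n) = ∅ :=
  Finset.filter_eq_empty_iff.mpr fun _ hL =>
    ((flatten_eq_and_length_le_of_mem_splits hL).2.trans_lt hn).ne

lemma sum_splits_cons {M : Type*} [AddCommMonoid M] (a : ℕ+) (v : Word) (F : List Word → M) :
    ∑ L ∈ splits (a :: v), F L
      = ∑ i ∈ Finset.range (v.length + 1),
          ∑ L ∈ splits (v.drop i), F ((a :: v.take i) :: L) := by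
  rw [splits, Finset.sum_biUnion, ← Finset.sum_attach (Finset.range (v.length + 1))]
  · exact Finset.sum_congr rfl fun i _ =>
      Finset.sum_image fun _ _ _ _ h => (List.cons_eq_cons.mp h).2
  · intro i _ j _ hij
    refine Finset.disjoint_left.mpr fun L hi hj => hij ?_
    simp only [Finset.mem_image] at hi hj
    obtain ⟨_, _, rfl⟩ := hi
    obtain ⟨_, _, h⟩ := hj
    have := congrArg List.length (List.cons_eq_cons.mp h).1
    have hi := Finset.mem_range.mp i.2
    have hj := Finset.mem_range.mp j.2
    simp only [List.length_cons, List.length_take] at this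
    exact Subtype.ext (by omega)

lemma sum_filter_splits_cons {M : Type*} [AddCommMonoid M] (a : ℕ+) (v : Word) (n : ℕ)
    (F : List Word → M) :
    ∑ L ∈ (splits (a :: v)).filter (·.length = n + 1), F L
      = ∑ i ∈ Finset.range (v.length + 1),
          ∑ L ∈ (splits (v.drop i)).filter (·.length = n), F ((a :: v.take i) :: L) := by
  simp only [Finset.sum_filter, sum_splits_cons, List.length_cons, add_left_inj]

lemma diagT_sub_unitT_apply_nil (u : Word) : (diagT - unitT : Word → Word → R) u [] = 0 := by
  by_cases hu : u = [] <;> simp [diagT, unitT, hu]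

lemma diagT_sub_unitT_apply_cons (u : Word) (a : ℕ+) (v : Word) :
    (diagT - unitT : Word → Word → R) u (a :: v) = if u = a :: v then 1 else 0 := by
  simp [diagT, unitT]

lemma tpow_diagT_sub_unitT_apply (q : R) (n : ℕ) (w w' : Word) :
    tpow q (diagT - unitT) n w w'
      = ∑ L ∈ (splits w').filter (·.length = n), stufList q L w := by
  induction n generalizing w w' with
  | zero =>
    simp only [tpow, unitT, Finset.sum_filter, List.length_eq_zero_iff, Finset.sum_ite_eq',
      nil_mem_splits_iff, stufList, Finsupp.single_apply]
    split_ifs <;> simp_all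
  | succ n ih =>
    rw [tpow, tmul]
    obtain _ | ⟨a, v⟩ := w'
    · simp [diagT_sub_unitT_apply_nil, stufS_zero_left, splits, Finset.filter_singleton]
    · rw [List.length_cons, Finset.sum_range_succ', sum_filter_splits_cons]
      simp only [List.take_zero, diagT_sub_unitT_apply_nil, stufS_zero_left, Pi.zero_apply,
        add_zero]
      refine Finset.sum_congr rfl fun i _ => ?_
      simp only [List.take_succ_cons, List.drop_succ_cons, diagT_sub_unitT_apply_cons,
        stufS_indicator_left_apply, ih, Finset.sum_mul]
      rw [Finset.sum_comm]
      simp only [sum_wordsUpTo_mul_stuf, stufList]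

lemma qpi1_apply [Algebra ℚ R] (q : R) (w w' : Word) :
    qpi1 q w w' = if weight w' ≤ weight w then
      ∑ n ∈ Finset.Icc 1 (weight w), ((-1 : ℚ) ^ (n - 1) / n) •
        ∑ L ∈ (splits w').filter (·.length = n), stufList q L w else 0 := by
  simp only [qpi1, Finsupp.finsetSum_apply, Finsupp.single_apply, Finset.sum_ite_eq',
    mem_wordsUpTo]

/-- The logarithm of the diagonal series `D_Y = Σ_w w ⊗ w`, in the algebra
with product `⊛_q` on the left tensor factor and concatenation on the right, equals
`Σ_{w ∈ Y⁺} w ⊗ π₁(w)`: coefficientwise, `⟨log D_Y, w ⊗ w'⟩ = ⟨π₁(w), w'⟩`. -/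
theorem log_diagonal (q : R) [Algebra ℚ R] (w w' : Word) :
    logT q diagT w w' = (qpi1 q w) w' := by
  rw [qpi1_apply, logT]
  simp only [tpow_diagT_sub_unitT_apply]
  split_ifs with hw'
  · refine Finset.sum_subset
      (Finset.Icc_subset_Icc_right ((length_le_weight w').trans hw')) fun n hn hn' => ?_
    rw [Finset.mem_Icc] at hn hn'
    rw [filter_splits_length_eq_empty (by omega), Finset.sum_empty, smul_zero]
  · refine Finset.sum_eq_zero fun n _ => ?_
    refine smul_eq_zero_of_right _ (Finset.sum_eq_zero fun L hL => ?_)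
    have hflat := (flatten_eq_and_length_le_of_mem_splits (Finset.mem_filter.mp hL).1).1
    exact stufList_apply_eq_zero_of_weight_ne q (by rw [← weight_flatten, hflat]; omega)
end
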